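/- Let λ₁ > 0, λ₂ ≥ 0, μ > 0. For every fixed t ≥ 0, the function x ↦ φ^{W*}(x + t)/φ^{W*}(x) is monotone increasing on [0, ∞); that is, the lifetime τ^{W*} of the Markovian warm standby system starting with one unit under repair belongs to the ageing class DLR (Decreasing Likelihood Ratio). -/
import Mathlib


/-- `a = sqrt((λ₂ + μ)² + 4 λ₁ μ)` for the warm standby system. -/
noncomputable def aW (l1 l2 m : ℝ) : ℝ := Real.sqrt ((l2 + m) ^ 2 + 4 * l1 * m)

/-- Density of the lifetime of the Markovian two-unit warm standby system starting with
one unit working as principal and the other under repair. -/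
noncomputable def phiWstar (l1 l2 m t : ℝ) : ℝ :=
  Real.exp (-((2 * l1 + l2 + m) * t / 2)) * l1 *
    (Real.cosh (aW l1 l2 m * t / 2) + ((l2 - m) / aW l1 l2 m) * Real.sinh (aW l1 l2 m * t / 2))

lemma key_ineq (A B s t x y : ℝ) (hA : 0 < A) (hB : 0 < B) (hs : 0 ≤ s) (ht : 0 ≤ t)
    (hxy : x ≤ y) :
    (A * Real.exp (s * (x + t)) + B * (Real.exp (s * (x + t)))⁻¹) *
        (A * Real.exp (s * y) + B * (Real.exp (s * y))⁻¹) ≤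
      (A * Real.exp (s * (y + t)) + B * (Real.exp (s * (y + t)))⁻¹) *
        (A * Real.exp (s * x) + B * (Real.exp (s * x))⁻¹) := by
  have hpq : Real.exp (s * x) ≤ Real.exp (s * y) :=
    Real.exp_le_exp.2 (by nlinarith)
  have hr : 1 ≤ Real.exp (s * t) := Real.one_le_exp (by positivity)
  have hxt : Real.exp (s * (x + t)) = Real.exp (s * x) * Real.exp (s * t) := by
    rw [← Real.exp_add]; ring_nf
  have hyt : Real.exp (s * (y + t)) = Real.exp (s * y) * Real.exp (s * t) := by
    rw [← Real.exp_add]; ring_nf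
  set p := Real.exp (s * x) with hp
  set q := Real.exp (s * y) with hq
  set r := Real.exp (s * t) with hrdef
  have hp0 : 0 < p := Real.exp_pos _
  have hq0 : 0 < q := Real.exp_pos _
  have hr0 : 0 < r := Real.exp_pos _
  rw [hxt, hyt, ← sub_nonneg]
  have hdiff : (A * (q * r) + B * (q * r)⁻¹) * (A * p + B * p⁻¹) -
      (A * (p * r) + B * (p * r)⁻¹) * (A * q + B * q⁻¹) =
      A * B / (p * q * r) * ((r ^ 2 - 1) * (q ^ 2 - p ^ 2)) := by
    field_simp
    ring
  rw [hdiff]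
  have hr2 : 0 ≤ r ^ 2 - 1 := by nlinarith
  have hqp : 0 ≤ q ^ 2 - p ^ 2 := by nlinarith
  have : 0 ≤ A * B / (p * q * r) := by positivity
  exact mul_nonneg this (mul_nonneg hr2 hqp)

theorem warm_star_DLR (l1 l2 m : ℝ) (h1 : 0 < l1) (h2 : 0 ≤ l2) (hm : 0 < m) :
    ∀ t ≥ (0 : ℝ),
      MonotoneOn (fun x : ℝ => phiWstar l1 l2 m (x + t) / phiWstar l1 l2 m x)
        (Set.Ici (0 : ℝ)) := by
  have hpos : (0:ℝ) < (l2 + m) ^ 2 + 4 * l1 * m := by nlinarith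
  have ha : 0 < aW l1 l2 m := Real.sqrt_pos.2 hpos
  have hb : |l2 - m| < aW l1 l2 m := by
    rw [show aW l1 l2 m = Real.sqrt ((l2 + m) ^ 2 + 4 * l1 * m) from rfl]
    rw [show |l2 - m| = Real.sqrt ((l2 - m) ^ 2) by rw [Real.sqrt_sq_eq_abs]]
    exact Real.sqrt_lt_sqrt (sq_nonneg _) (by nlinarith)
  set a := aW l1 l2 m with hadef
  set b := (l2 - m) / a with hbdef
  have hb1 : |b| < 1 := by
    rw [hbdef, abs_div, abs_of_pos ha, div_lt_one ha]; exact hb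
  have hA : 0 < (1 + b) / 2 := by have := abs_lt.1 hb1; linarith [this.1]
  have hB : 0 < (1 - b) / 2 := by have := abs_lt.1 hb1; linarith [(abs_lt.1 hb1).2]
  set A := (1 + b) / 2 with hAdef
  set B := (1 - b) / 2 with hBdef
  set s := a / 2 with hsdef
  have hs : 0 ≤ s := by positivity
  have phi_eq : ∀ u : ℝ, phiWstar l1 l2 m u =
      Real.exp (-((2 * l1 + l2 + m) * u / 2)) * l1 *
        (A * Real.exp (s * u) + B * (Real.exp (s * u))⁻¹) := by
    intro u
    have h1' : a * u / 2 = s * u := by rw [hsdef]; ring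
    rw [phiWstar, ← hadef, h1', Real.cosh_eq, Real.sinh_eq, hAdef, hBdef]
    simp only [Real.exp_neg]
    ring
  have hGpos : ∀ u : ℝ, 0 < A * Real.exp (s * u) + B * (Real.exp (s * u))⁻¹ := by
    intro u; positivity
  have hphipos : ∀ u : ℝ, 0 < phiWstar l1 l2 m u := by
    intro u; rw [phi_eq u]; positivity
  intro t ht x hx y hy hxy
  simp only
  rw [div_le_div_iff₀ (hphipos x) (hphipos y)]
  rw [phi_eq (x + t), phi_eq (y + t), phi_eq x, phi_eq y]
  have hEE : Real.exp (-((2 * l1 + l2 + m) * (x + t) / 2)) *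
      Real.exp (-((2 * l1 + l2 + m) * y / 2)) =
      Real.exp (-((2 * l1 + l2 + m) * (y + t) / 2)) *
      Real.exp (-((2 * l1 + l2 + m) * x / 2)) := by
    rw [← Real.exp_add, ← Real.exp_add]; ring_nf
  have hkey := key_ineq A B s t x y hA hB hs ht hxy
  set Ext := Real.exp (-((2 * l1 + l2 + m) * (x + t) / 2))
  set Eyt := Real.exp (-((2 * l1 + l2 + m) * (y + t) / 2))
  set Ex := Real.exp (-((2 * l1 + l2 + m) * x / 2))
  set Ey := Real.exp (-((2 * l1 + l2 + m) * y / 2))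
  have hE0 : 0 < Ext * Ey := by positivity
  calc Ext * l1 * (A * Real.exp (s * (x + t)) + B * (Real.exp (s * (x + t)))⁻¹) *
        (Ey * l1 * (A * Real.exp (s * y) + B * (Real.exp (s * y))⁻¹))
      = (Ext * Ey) * (l1 * l1) *
        ((A * Real.exp (s * (x + t)) + B * (Real.exp (s * (x + t)))⁻¹) *
         (A * Real.exp (s * y) + B * (Real.exp (s * y))⁻¹)) := by ring
    _ ≤ (Ext * Ey) * (l1 * l1) *
        ((A * Real.exp (s * (y + t)) + B * (Real.exp (s * (y + t)))⁻¹) *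
         (A * Real.exp (s * x) + B * (Real.exp (s * x))⁻¹)) := by
        apply mul_le_mul_of_nonneg_left hkey (by positivity)
    _ = Eyt * l1 * (A * Real.exp (s * (y + t)) + B * (Real.exp (s * (y + t)))⁻¹) *
        (Ex * l1 * (A * Real.exp (s * x) + B * (Real.exp (s * x))⁻¹)) := by
        rw [hEE]; ring
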